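/- Let λ be a regular element of the coroot lattice (i.e., ⟨λ, α⟩ ≠ 0 for all roots α) and let w be a nontrivial element of the finite Weyl group W of order m. Then the Newton point ν = ((1/m) ∑_{i=1}^m w^i(λ))^+, the dominant representative of the W-orbit of the orbit-average, is strictly less than λ^+ in dominance order (strictly: ν ≤ λ^+ and ν ≠ λ^+). -/

import Mathlib

noncomputable section

open scoped Classical
open scoped RealInnerProductSpace
open Finset

variable {V : Type*} [NormedAddCommGroup V] [InnerProductSpace ℝ V] [FiniteDimensional ℝ V]

/-- A (reduced, crystallographic) root system in a Euclidean space, with a fixed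
choice of positive roots `Rpos` and simple roots `Δ`. -/
structure IsRootSystem (R Rpos Δ : Finset V) : Prop where
  nonzero : ∀ α ∈ R, α ≠ (0 : V)
  reduced : ∀ α ∈ R, ∀ c : ℝ, c • α ∈ R → c = 1 ∨ c = -1
  crystallographic : ∀ α ∈ R, ∀ β ∈ R, ∃ n : ℤ, 2 * ⟪β, α⟫ / ⟪α, α⟫ = (n : ℝ)
  reflect_mem : ∀ α ∈ R, ∀ β ∈ R, β - (2 * ⟪β, α⟫ / ⟪α, α⟫) • α ∈ R
  pos_subset : Rpos ⊆ R
  pos_or_neg : ∀ α ∈ R, α ∈ Rpos ∨ -α ∈ Rpos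
  not_both : ∀ α ∈ Rpos, -α ∉ Rpos
  simple_subset : Δ ⊆ Rpos
  simple_nonneg_comb : ∀ α ∈ Rpos, ∃ c : V → ℝ, (∀ β ∈ Δ, 0 ≤ c β) ∧ α = ∑ β ∈ Δ, c β • β
  simple_indep : LinearIndependent ℝ (fun β : (Δ : Set V) => (β : V))

/-- The coroot `α^∨ = 2α/(α,α)` of a root `α`, in the Euclidean identification. -/
def coroot (α : V) : V := (2 / ⟪α, α⟫) • α

/-- The half-sum `ρ` of the positive roots. -/
def rho (Rpos : Finset V) : V := (2 : ℝ)⁻¹ • ∑ α ∈ Rpos, α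

/-- The reflection `r_α` across the hyperplane orthogonal to `α`. -/
def sref (α : V) : V ≃ₗᵢ[ℝ] V := Submodule.reflection (ℝ ∙ α)ᗮ

/-- The Weyl group: the subgroup of isometries generated by the reflections in the roots. -/
def weylGroup (R : Finset V) : Subgroup (V ≃ₗᵢ[ℝ] V) :=
  Subgroup.closure { g | ∃ α ∈ R, g = sref α }

/-- The length of a Weyl group element: the number of positive roots it sends negative. -/
def lenW (Rpos : Finset V) (w : V ≃ₗᵢ[ℝ] V) : ℕ :=
  (Rpos.filter (fun α => w α ∉ Rpos)).card

/-- Dominance: nonnegative pairing against every positive root. -/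
def isDominant (Rpos : Finset V) (lam : V) : Prop := ∀ α ∈ Rpos, 0 ≤ ⟪lam, α⟫

/-- Dominance order: `μ ≤ lam` iff `lam - μ` is a nonnegative rational combination of the
coroots of the roots in `S`. -/
def domLE (S : Finset V) (μ lam : V) : Prop :=
  ∃ c : V → ℚ, (∀ β ∈ S, 0 ≤ c β) ∧ lam - μ = ∑ β ∈ S, (c β : ℝ) • coroot β

/-- The coroot lattice `Q^∨`. -/
def corootLattice (R : Finset V) : Submodule ℤ V := Submodule.span ℤ (coroot '' (R : Set V))

/-!
For `g_i = u * w ^ (i + 1) * u'⁻¹` in the Weyl group, `ν` is the mean of the points `g_i λ⁺`.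
For dominant `x` the difference `x - g x` is a nonnegative rational combination of positive
coroots: induct on the number of positive roots that `g` makes negative, splitting off a simple
reflection `s_α` with `g α < 0`, which contributes `⟪x, α⟫ • (g s_α α)^∨`. Averaging gives
`ν ≤ λ⁺`. If `ν = λ⁺`, then `λ⁺` is the mean of points on the sphere of radius `‖λ⁺‖`, so every
`g_i λ⁺ = λ⁺` by strict convexity. The Weyl group acts freely on regular elements (an element
mapping positive roots to positive roots is trivial, by the exchange argument on words in simple
reflections), so `g_0 = g_1 = 1`, whence `w = 1`.
-/

section InnerProductSpace

variable {E : Type*} [NormedAddCommGroup E] [InnerProductSpace ℝ E]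

theorem sref_apply (α x : E) : sref α x = x - (2 * ⟪x, α⟫ / ⟪α, α⟫) • α := by
  rw [sref, Submodule.reflection_orthogonal_apply, Submodule.reflection_singleton_apply,
    real_inner_self_eq_norm_sq, real_inner_comm]
  simp only [RCLike.ofReal_real_eq_id, id_eq]
  module

theorem sref_self (α : E) : sref α α = -α :=
  Submodule.reflection_orthogonalComplement_singleton_eq_neg α

theorem sref_sref (α x : E) : sref α (sref α x) = x :=
  Submodule.reflection_reflection _ x

theorem sref_mul_self (α : E) : sref α * sref α = 1 :=
  Submodule.reflection_mul_reflection _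

theorem sref_inv (α : E) : (sref α)⁻¹ = sref α :=
  Submodule.reflection_inv

theorem sref_neg (α : E) : sref (-α) = sref α := by
  ext x
  simp [sref_apply, neg_div, sub_eq_add_neg]

theorem inner_sref_left (α x y : E) : ⟪sref α x, y⟫ = ⟪x, sref α y⟫ := by
  rw [← (sref α).inner_map_map x, sref_sref]

theorem coroot_map (g : E ≃ₗᵢ[ℝ] E) (α : E) : coroot (g α) = g (coroot α) := by
  rw [coroot, coroot, g.inner_map_map, map_smul]

theorem inner_coroot (x α : E) : ⟪x, coroot α⟫ = 2 * ⟪x, α⟫ / ⟪α, α⟫ := by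
  rw [coroot, real_inner_smul_right]
  ring

theorem inner_coroot_pos {x α : E} (hα : α ≠ 0) (hxα : 0 < ⟪x, α⟫) : 0 < ⟪x, coroot α⟫ := by
  rw [coroot, real_inner_smul_right]
  exact mul_pos (div_pos two_pos (real_inner_self_pos.2 hα)) hxα

theorem sref_map (g : E ≃ₗᵢ[ℝ] E) (α : E) : sref (g α) = g * sref α * g⁻¹ := by
  ext x
  have hx : ⟪x, g α⟫ = ⟪g⁻¹ x, α⟫ := by
    rw [← g.inner_map_map (g⁻¹ x)]
    simp
  simp [sref_apply, hx]

theorem eq_of_sum_eq_card_smul_of_norm_le {ι : Type*} {s : Finset ι} {f : ι → E} {x : E}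
    (hf : ∀ i ∈ s, ‖f i‖ ≤ ‖x‖) (hsum : ∑ i ∈ s, f i = (#s : ℝ) • x) :
    ∀ i ∈ s, f i = x := by
  have hle : ∀ i ∈ s, ⟪x, f i⟫ ≤ ‖x‖ ^ 2 := fun i hi =>
    (real_inner_le_norm _ _).trans (by nlinarith [hf i hi, norm_nonneg x])
  have hinner : ∑ i ∈ s, ⟪x, f i⟫ = ∑ _i ∈ s, ‖x‖ ^ 2 := by
    rw [← inner_sum, hsum, real_inner_smul_right, real_inner_self_eq_norm_sq, sum_const,
      nsmul_eq_mul]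
  intro i hi
  have hxfi := (sum_eq_sum_iff_of_le hle).1 hinner i hi
  have hdist : ‖x - f i‖ ^ 2 = 0 := by
    refine le_antisymm ?_ (sq_nonneg _)
    rw [norm_sub_sq_real, hxfi]
    nlinarith [hf i hi, norm_nonneg (f i)]
  exact (sub_eq_zero.1 (norm_eq_zero.1 (pow_eq_zero_iff two_ne_zero |>.1 hdist))).symm

theorem sref_mem_weylGroup {R : Finset E} {α : E} (hα : α ∈ R) : sref α ∈ weylGroup R :=
  Subgroup.subset_closure ⟨α, hα, rfl⟩

theorem weylGroup_apply_of_forall_inner_eq_zero {R : Finset E} {g : E ≃ₗᵢ[ℝ] E}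
    (hg : g ∈ weylGroup R) {x : E} (hx : ∀ α ∈ R, ⟪x, α⟫ = 0) : g x = x := by
  induction hg using Subgroup.closure_induction'' with
  | mem g hg =>
    obtain ⟨α, hα, rfl⟩ := hg
    simp [sref_apply, hx α hα]
  | inv_mem g hg =>
    obtain ⟨α, hα, rfl⟩ := hg
    simp [sref_inv, sref_apply, hx α hα]
  | one => rfl
  | mul g g' _ _ hg hg' => simp [hg, hg']

theorem weylGroup_ext {R : Finset E} {g g' : E ≃ₗᵢ[ℝ] E} (hg : g ∈ weylGroup R)
    (hg' : g' ∈ weylGroup R) (H : ∀ α ∈ R, g α = g' α) : g = g' := by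
  ext x
  obtain ⟨y, hy, z, hz, rfl⟩ := (Submodule.span ℝ (R : Set E)).exists_add_mem_mem_orthogonal x
  have hz : ∀ α ∈ R, ⟪z, α⟫ = 0 := fun α hα =>
    (Submodule.mem_orthogonal' _ _).1 hz α (Submodule.subset_span hα)
  have hy : g y = g' y :=
    LinearMap.eqOn_span (f := g.toLinearEquiv.toLinearMap) (g := g'.toLinearEquiv.toLinearMap) H hy
  rw [map_add, map_add, hy, weylGroup_apply_of_forall_inner_eq_zero hg hz,
    weylGroup_apply_of_forall_inner_eq_zero hg' hz]

def simpleReflections (Δ : Finset E) : Set (E ≃ₗᵢ[ℝ] E) := sref '' (Δ : Set E)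

def reflProd (L : List E) : E ≃ₗᵢ[ℝ] E := (L.map sref).prod

@[simp]
theorem reflProd_nil : reflProd ([] : List E) = 1 := rfl

@[simp]
theorem reflProd_cons (γ : E) (L : List E) : reflProd (γ :: L) = sref γ * reflProd L :=
  List.prod_cons

@[simp]
theorem reflProd_append (L L' : List E) : reflProd (L ++ L') = reflProd L * reflProd L' := by
  simp [reflProd]

theorem exists_reflProd_eq_of_mem_closure {Δ : Finset E} {g : E ≃ₗᵢ[ℝ] E}
    (hg : g ∈ Subgroup.closure (simpleReflections Δ)) :
    ∃ L : List E, (∀ γ ∈ L, γ ∈ Δ) ∧ reflProd L = g := by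
  induction hg using Subgroup.closure_induction'' with
  | mem g hg =>
    obtain ⟨γ, hγ, rfl⟩ := hg
    exact ⟨[γ], by simpa using hγ, by simp⟩
  | inv_mem g hg =>
    obtain ⟨γ, hγ, rfl⟩ := hg
    exact ⟨[γ], by simpa using hγ, by simp [sref_inv]⟩
  | one => exact ⟨[], by simp, rfl⟩
  | mul g g' _ _ hg hg' =>
    obtain ⟨L, hL, rfl⟩ := hg
    obtain ⟨L', hL', rfl⟩ := hg'
    exact ⟨L ++ L', by simpa [or_imp, forall_and] using ⟨hL, hL'⟩, reflProd_append L L'⟩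

def corootCone (S : Finset E) : AddSubmonoid E where
  carrier := {x | ∃ c : E → ℚ, (∀ β ∈ S, 0 ≤ c β) ∧ x = ∑ β ∈ S, (c β : ℝ) • coroot β}
  zero_mem' := ⟨0, fun _ _ => le_rfl, by simp⟩
  add_mem' := by
    rintro _ _ ⟨c, hc, rfl⟩ ⟨d, hd, rfl⟩
    exact ⟨c + d, fun β hβ => add_nonneg (hc β hβ) (hd β hβ), by
      simp [add_smul, sum_add_distrib]⟩

theorem domLE_iff_sub_mem_corootCone {S : Finset E} {μ lam : E} :
    domLE S μ lam ↔ lam - μ ∈ corootCone S :=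
  Iff.rfl

theorem coroot_mem_corootCone {S : Finset E} {β : E} (hβ : β ∈ S) : coroot β ∈ corootCone S :=
  ⟨fun γ => if γ = β then 1 else 0, fun γ _ => by dsimp only; split_ifs <;> norm_num, by
    simp [apply_ite (Rat.cast : ℚ → ℝ), ite_smul, hβ]⟩

theorem ratCast_smul_mem_corootCone {S : Finset E} {x : E} {q : ℚ} (hq : 0 ≤ q)
    (hx : x ∈ corootCone S) : (q : ℝ) • x ∈ corootCone S := by
  obtain ⟨c, hc, rfl⟩ := hx
  exact ⟨q • c, fun β hβ => mul_nonneg hq (hc β hβ), by simp [smul_sum, smul_smul]⟩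

def isStrictlyDominant (Rpos : Finset E) (x : E) : Prop := ∀ α ∈ Rpos, 0 < ⟪x, α⟫

namespace IsRootSystem

variable {R Rpos Δ : Finset E}

theorem ne_zero_of_mem_simple (h : IsRootSystem R Rpos Δ) {α : E} (hα : α ∈ Δ) : α ≠ 0 :=
  h.nonzero α (h.pos_subset (h.simple_subset hα))

theorem sref_apply_mem (h : IsRootSystem R Rpos Δ) {α β : E} (hα : α ∈ R) (hβ : β ∈ R) :
    sref α β ∈ R := by
  rw [sref_apply]
  exact h.reflect_mem α hα β hβ

theorem weylGroup_apply_mem (h : IsRootSystem R Rpos Δ) {g : E ≃ₗᵢ[ℝ] E}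
    (hg : g ∈ weylGroup R) {α : E} (hα : α ∈ R) : g α ∈ R := by
  induction hg using Subgroup.closure_induction'' generalizing α with
  | mem g hg =>
    obtain ⟨β, hβ, rfl⟩ := hg
    exact h.sref_apply_mem hβ hα
  | inv_mem g hg =>
    obtain ⟨β, hβ, rfl⟩ := hg
    exact sref_inv β ▸ h.sref_apply_mem hβ hα
  | one => exact hα
  | mul g g' _ _ hg hg' => exact hg (hg' hα)

theorem finite_weylGroup (h : IsRootSystem R Rpos Δ) : Finite (weylGroup R) := by
  refine Finite.of_injective
    (fun g : weylGroup R => fun α : R => (⟨g.1 α, h.weylGroup_apply_mem g.2 α.2⟩ : R)) ?_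
  intro g g' hgg'
  exact Subtype.ext <| weylGroup_ext g.2 g'.2 fun α hα =>
    congrArg Subtype.val (congrFun hgg' ⟨α, hα⟩)

theorem orderOf_pos (h : IsRootSystem R Rpos Δ) {g : E ≃ₗᵢ[ℝ] E} (hg : g ∈ weylGroup R) :
    0 < orderOf g := by
  have := h.finite_weylGroup
  rw [← Subgroup.orderOf_mk g hg]
  exact _root_.orderOf_pos _

theorem exists_int_inner_coroot (h : IsRootSystem R Rpos Δ) {α β : E} (hα : α ∈ R)
    (hβ : β ∈ R) : ∃ n : ℤ, ⟪β, coroot α⟫ = n := by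
  rw [inner_coroot]
  exact h.crystallographic α hα β hβ

theorem exists_int_inner_of_mem_corootLattice (h : IsRootSystem R Rpos Δ) {x : E}
    (hx : x ∈ corootLattice R) {α : E} (hα : α ∈ R) : ∃ n : ℤ, ⟪x, α⟫ = n := by
  induction hx using Submodule.span_induction with
  | mem y hy =>
    obtain ⟨β, hβ, rfl⟩ := hy
    rw [real_inner_comm]
    exact h.exists_int_inner_coroot hβ hα
  | zero => exact ⟨0, by simp⟩
  | add y z _ _ hy hz =>
    obtain ⟨a, ha⟩ := hy
    obtain ⟨b, hb⟩ := hz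
    exact ⟨a + b, by simp [inner_add_left, ha, hb]⟩
  | smul n y _ hy =>
    obtain ⟨a, ha⟩ := hy
    exact ⟨n * a, by simp [← Int.cast_smul_eq_zsmul ℝ, real_inner_smul_left, ha]⟩

theorem coeff_eq_zero_of_sum_eq_zero (h : IsRootSystem R Rpos Δ) {c : E → ℝ}
    (hc : ∑ γ ∈ Δ, c γ • γ = 0) {γ : E} (hγ : γ ∈ Δ) : c γ = 0 :=
  (linearIndepOn_iff' (v := id)).1 h.simple_indep Δ c subset_rfl hc γ hγ

theorem mem_pos_of_coeff_pos (h : IsRootSystem R Rpos Δ) {δ : E} (hδ : δ ∈ R) {d : E → ℝ}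
    (hd : δ = ∑ γ ∈ Δ, d γ • γ) {γ₀ : E} (hγ₀ : γ₀ ∈ Δ) (hpos : 0 < d γ₀) : δ ∈ Rpos := by
  refine (h.pos_or_neg δ hδ).resolve_right fun hneg => ?_
  obtain ⟨c, hc, hcδ⟩ := h.simple_nonneg_comb _ hneg
  have hsum : ∑ γ ∈ Δ, (d γ + c γ) • γ = 0 := by
    simp only [add_smul, sum_add_distrib, ← hd, ← hcδ, add_neg_cancel]
  linarith [h.coeff_eq_zero_of_sum_eq_zero hsum hγ₀, hc γ₀ hγ₀]

theorem exists_coeff_pos_of_ne (h : IsRootSystem R Rpos Δ) {α β : E} (hα : α ∈ Δ)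
    (hβ : β ∈ Rpos) (hβα : β ≠ α) {c : E → ℝ} (hc : ∀ γ ∈ Δ, 0 ≤ c γ)
    (hcβ : β = ∑ γ ∈ Δ, c γ • γ) : ∃ γ ∈ Δ, γ ≠ α ∧ 0 < c γ := by
  by_contra! hcon
  have hβα' : β = c α • α := by
    rw [hcβ, sum_eq_single_of_mem α hα]
    intro γ hγ hγα
    rw [le_antisymm (hcon γ hγ hγα) (hc γ hγ), zero_smul]
  have hαpos := h.simple_subset hα
  rcases h.reduced α (h.pos_subset hαpos) (c α) (hβα' ▸ h.pos_subset hβ) with h1 | h1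
  · exact hβα (by rw [hβα', h1, one_smul])
  · exact h.not_both α hαpos (by rwa [hβα', h1, neg_one_smul] at hβ)

theorem sref_mem_erase (h : IsRootSystem R Rpos Δ) {α β : E} (hα : α ∈ Δ)
    (hβ : β ∈ Rpos.erase α) : sref α β ∈ Rpos.erase α := by
  obtain ⟨hβα, hβ⟩ := mem_erase.1 hβ
  have hαR := h.pos_subset (h.simple_subset hα)
  obtain ⟨c, hc, hcβ⟩ := h.simple_nonneg_comb β hβ
  obtain ⟨γ, hγ, hγα, hcγ⟩ := h.exists_coeff_pos_of_ne hα hβ hβα hc hcβ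
  -- `sref α` changes only the `α`-coefficient, so the positive coefficient at `γ ≠ α` survives
  have hrepr : sref α β = ∑ δ ∈ Δ, (c δ - if δ = α then 2 * ⟪β, α⟫ / ⟪α, α⟫ else 0) • δ := by
    simp only [sub_smul, sum_sub_distrib, ite_smul, zero_smul, sum_ite_eq', if_pos hα, ← hcβ,
      sref_apply]
  refine mem_erase.2 ⟨fun hsα => ?_, h.mem_pos_of_coeff_pos (h.sref_apply_mem hαR
    (h.pos_subset hβ)) hrepr hγ (by simpa [hγα] using hcγ)⟩
  have hβneg : β = -α := by rw [← sref_sref α β, hsα, sref_self]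
  exact h.not_both α (h.simple_subset hα) (hβneg ▸ hβ)

theorem sref_rho (h : IsRootSystem R Rpos Δ) {α : E} (hα : α ∈ Δ) :
    sref α (rho Rpos) = rho Rpos - α := by
  have hαpos := h.simple_subset hα
  have hperm : ∑ β ∈ Rpos.erase α, sref α β = ∑ β ∈ Rpos.erase α, β :=
    sum_nbij' (sref α) (sref α) (fun β hβ => h.sref_mem_erase hα hβ)
      (fun β hβ => h.sref_mem_erase hα hβ) (fun β _ => sref_sref α β)
      (fun β _ => sref_sref α β) (fun _ _ => rfl)
  have hsum : sref α (∑ β ∈ Rpos, β) = ∑ β ∈ Rpos, β - (2 : ℝ) • α := by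
    rw [map_sum, ← add_sum_erase _ _ hαpos, ← add_sum_erase _ _ hαpos, hperm, sref_self]
    module
  rw [rho, map_smul, hsum]
  module

theorem inner_rho_simple (h : IsRootSystem R Rpos Δ) {α : E} (hα : α ∈ Δ) :
    ⟪rho Rpos, α⟫ = ⟪α, α⟫ / 2 := by
  have hα0 := h.ne_zero_of_mem_simple hα
  have hαα : ⟪α, α⟫ ≠ 0 := inner_self_ne_zero.2 hα0
  have hcoeff : (2 * ⟪rho Rpos, α⟫ / ⟪α, α⟫) • α = (1 : ℝ) • α := by
    have := h.sref_rho hα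
    rw [sref_apply] at this
    rw [one_smul]
    exact sub_right_injective this
  have := smul_left_injective ℝ hα0 hcoeff
  field_simp at this
  linarith

theorem isStrictlyDominant_rho (h : IsRootSystem R Rpos Δ) :
    isStrictlyDominant Rpos (rho Rpos) := by
  intro β hβ
  obtain ⟨c, hc, hcβ⟩ := h.simple_nonneg_comb β hβ
  have hρ : ∀ γ ∈ Δ, 0 < ⟪rho Rpos, γ⟫ := fun γ hγ => by
    rw [h.inner_rho_simple hγ]
    exact half_pos (real_inner_self_pos.2 (h.ne_zero_of_mem_simple hγ))
  have hβ0 : ∑ γ ∈ Δ, c γ • γ ≠ 0 := hcβ ▸ h.nonzero β (h.pos_subset hβ)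
  obtain ⟨γ₀, hγ₀, hne⟩ := exists_ne_zero_of_sum_ne_zero hβ0
  rw [hcβ, inner_sum]
  refine sum_pos' (fun γ hγ => ?_) ⟨γ₀, hγ₀, ?_⟩
  · rw [real_inner_smul_right]
    exact mul_nonneg (hc γ hγ) (hρ γ hγ).le
  · rw [real_inner_smul_right]
    exact mul_pos ((hc γ₀ hγ₀).lt_of_ne' fun e => hne (by rw [e, zero_smul])) (hρ γ₀ hγ₀)

theorem mem_pos_of_inner_nonneg (h : IsRootSystem R Rpos Δ) {x δ : E}
    (hx : isStrictlyDominant Rpos x) (hδ : δ ∈ R) (hxδ : 0 ≤ ⟪x, δ⟫) : δ ∈ Rpos :=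
  (h.pos_or_neg δ hδ).resolve_right fun hneg => by
    have := hx _ hneg
    rw [inner_neg_right] at this
    linarith

theorem mapsTo_pos_of_mapsTo_simple (h : IsRootSystem R Rpos Δ) {v : E ≃ₗᵢ[ℝ] E}
    (hv : v ∈ weylGroup R) (hvΔ : ∀ α ∈ Δ, v α ∈ Rpos) {β : E} (hβ : β ∈ Rpos) :
    v β ∈ Rpos := by
  obtain ⟨c, hc, hcβ⟩ := h.simple_nonneg_comb β hβ
  refine h.mem_pos_of_inner_nonneg h.isStrictlyDominant_rho
    (h.weylGroup_apply_mem hv (h.pos_subset hβ)) ?_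
  rw [hcβ, map_sum, inner_sum]
  refine sum_nonneg fun γ hγ => ?_
  rw [map_smul, real_inner_smul_right]
  exact mul_nonneg (hc γ hγ) (h.isStrictlyDominant_rho _ (hvΔ γ hγ)).le

theorem exists_simple_inner_pos (h : IsRootSystem R Rpos Δ) {α : E} (hα : α ∈ Rpos) :
    ∃ γ ∈ Δ, 0 < ⟪α, γ⟫ := by
  obtain ⟨c, hc, hcα⟩ := h.simple_nonneg_comb α hα
  have hpos : 0 < ⟪α, α⟫ := real_inner_self_pos.2 (h.nonzero α (h.pos_subset hα))
  nth_rw 2 [hcα] at hpos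
  rw [inner_sum] at hpos
  obtain ⟨γ, hγ, hγpos⟩ := exists_lt_of_sum_lt (f := fun _ => (0 : ℝ)) (by simpa using hpos)
  rw [real_inner_smul_right] at hγpos
  exact ⟨γ, hγ, pos_of_mul_pos_right hγpos (hc γ hγ)⟩

theorem sref_mem_closure_simpleReflections (h : IsRootSystem R Rpos Δ) {α : E}
    (hα : α ∈ Rpos) : sref α ∈ Subgroup.closure (simpleReflections Δ) := by
  -- induction on the height `⟪ρ, α^∨⟫`, which `sref γ` lowers by the positive integer `⟪γ, α^∨⟫`
  obtain ⟨n, hn⟩ := exists_nat_gt ⟪rho Rpos, coroot α⟫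
  induction n generalizing α with
  | zero =>
    have hpos := inner_coroot_pos (h.nonzero α (h.pos_subset hα)) (h.isStrictlyDominant_rho α hα)
    exact absurd hn (by simpa using hpos.le)
  | succ n ih =>
    obtain ⟨γ, hγ, hαγ⟩ := h.exists_simple_inner_pos hα
    have hγgen : sref γ ∈ Subgroup.closure (simpleReflections Δ) :=
      Subgroup.subset_closure ⟨γ, hγ, rfl⟩
    by_cases hγα : α = γ
    · exact hγα ▸ hγgen
    have hα' : sref γ α ∈ Rpos :=
      (mem_erase.1 (h.sref_mem_erase hγ (mem_erase.2 ⟨hγα, hα⟩))).2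
    obtain ⟨k, hk⟩ := h.exists_int_inner_coroot (h.pos_subset hα)
      (h.pos_subset (h.simple_subset hγ))
    have hk0 : 0 < ⟪γ, coroot α⟫ :=
      inner_coroot_pos (h.nonzero α (h.pos_subset hα)) (real_inner_comm α γ ▸ hαγ)
    have hk1 : (1 : ℝ) ≤ k := by
      rw [hk] at hk0
      exact_mod_cast (Int.cast_pos.1 hk0 : 0 < k)
    have hdrop : ⟪rho Rpos, coroot (sref γ α)⟫ = ⟪rho Rpos, coroot α⟫ - ⟪γ, coroot α⟫ := by
      rw [coroot_map, ← inner_sref_left, h.sref_rho hγ, inner_sub_left]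
    have hconj : sref α = sref γ * sref (sref γ α) * sref γ := by
      rw [sref_map, sref_inv, ← mul_assoc, ← mul_assoc, sref_mul_self, one_mul, mul_assoc,
        sref_mul_self, mul_one]
    rw [hconj]
    refine mul_mem (mul_mem hγgen (ih hα' ?_)) hγgen
    rw [hdrop, hk]
    push_cast at hn
    linarith

theorem weylGroup_le_closure_simpleReflections (h : IsRootSystem R Rpos Δ) :
    weylGroup R ≤ Subgroup.closure (simpleReflections Δ) := by
  refine (Subgroup.closure_le _).2 ?_
  rintro _ ⟨α, hα, rfl⟩
  rcases h.pos_or_neg α hα with hpos | hneg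
  · exact h.sref_mem_closure_simpleReflections hpos
  · exact sref_neg α ▸ h.sref_mem_closure_simpleReflections hneg

theorem exists_reflProd_eq_mul_sref (h : IsRootSystem R Rpos Δ) {L : List E}
    (hL : ∀ γ ∈ L, γ ∈ Δ) {β : E} (hβ : β ∈ Δ) (hLβ : reflProd L β ∉ Rpos) :
    ∃ L' : List E, (∀ γ ∈ L', γ ∈ Δ) ∧ L'.length + 1 = L.length ∧
      reflProd L * sref β = reflProd L' := by
  induction L with
  | nil => exact absurd (h.simple_subset hβ) hLβ
  | cons γ L ih =>
    have hγ : γ ∈ Δ := hL γ List.mem_cons_self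
    have hL : ∀ γ ∈ L, γ ∈ Δ := fun γ' hγ' => hL γ' (List.mem_cons_of_mem γ hγ')
    by_cases hpos : reflProd L β ∈ Rpos
    · -- `sref γ` keeps every positive root other than `γ` positive
      have hγ_eq : reflProd L β = γ := by
        by_contra hne
        exact hLβ (mem_erase.1 (h.sref_mem_erase hγ (mem_erase.2 ⟨hne, hpos⟩))).2
      refine ⟨L, hL, rfl, ?_⟩
      rw [reflProd_cons, ← hγ_eq, sref_map]
      simp only [mul_assoc, inv_mul_cancel_left, sref_mul_self, mul_one]
    · obtain ⟨L', hL', hlen, heq⟩ := ih hL hpos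
      refine ⟨γ :: L', ?_, by simp [hlen], by rw [reflProd_cons, mul_assoc, heq, reflProd_cons]⟩
      simpa [hγ] using hL'

theorem reflProd_eq_one_of_mapsTo_pos (h : IsRootSystem R Rpos Δ) {L : List E}
    (hL : ∀ γ ∈ L, γ ∈ Δ) (hpos : ∀ α ∈ Rpos, reflProd L α ∈ Rpos) : reflProd L = 1 := by
  induction hn : L.length using Nat.strong_induction_on generalizing L with
  | _ n ih =>
  rcases L.eq_nil_or_concat with rfl | ⟨L₀, β, rfl⟩
  · rfl
  simp only [List.concat_eq_append, List.mem_append, List.mem_singleton] at hL hpos hn ⊢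
  have hβ : β ∈ Δ := hL β (Or.inr rfl)
  have hneg : reflProd L₀ β ∉ Rpos := fun hβpos => by
    have := hpos β (h.simple_subset hβ)
    simp only [reflProd_append, reflProd_cons, reflProd_nil, mul_one, LinearIsometryEquiv.coe_mul,
      Function.comp_apply, sref_self, map_neg] at this
    exact h.not_both _ hβpos this
  obtain ⟨L', hL', hlen, heq⟩ :=
    h.exists_reflProd_eq_mul_sref (fun γ hγ => hL γ (Or.inl hγ)) hβ hneg
  rw [reflProd_append, reflProd_cons, reflProd_nil, mul_one, heq] at hpos ⊢
  exact ih L'.length (by simp at hn; omega) hL' hpos rfl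

theorem eq_one_of_mapsTo_pos (h : IsRootSystem R Rpos Δ) {g : E ≃ₗᵢ[ℝ] E}
    (hg : g ∈ weylGroup R) (hpos : ∀ α ∈ Rpos, g α ∈ Rpos) : g = 1 := by
  obtain ⟨L, hL, rfl⟩ :=
    exists_reflProd_eq_of_mem_closure (h.weylGroup_le_closure_simpleReflections hg)
  exact h.reflProd_eq_one_of_mapsTo_pos hL hpos

theorem eq_one_of_apply_eq_self (h : IsRootSystem R Rpos Δ) {g : E ≃ₗᵢ[ℝ] E}
    (hg : g ∈ weylGroup R) {x : E} (hx : isStrictlyDominant Rpos x) (hgx : g x = x) : g = 1 :=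
  h.eq_one_of_mapsTo_pos hg fun α hα =>
    h.mem_pos_of_inner_nonneg hx (h.weylGroup_apply_mem hg (h.pos_subset hα))
      (by rw [← hgx, g.inner_map_map]; exact (hx α hα).le)

theorem mul_sref_apply_self_mem_pos (h : IsRootSystem R Rpos Δ) {v : E ≃ₗᵢ[ℝ] E}
    (hv : v ∈ weylGroup R) {α : E} (hα : α ∈ R) (hvα : v α ∉ Rpos) :
    (v * sref α) α ∈ Rpos := by
  rw [LinearIsometryEquiv.coe_mul, Function.comp_apply, sref_self, map_neg]
  exact (h.pos_or_neg _ (h.weylGroup_apply_mem hv hα)).resolve_left hvα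

theorem lenW_mul_sref_add_one (h : IsRootSystem R Rpos Δ) {v : E ≃ₗᵢ[ℝ] E}
    (hv : v ∈ weylGroup R) {α : E} (hα : α ∈ Δ) (hvα : v α ∉ Rpos) :
    lenW Rpos (v * sref α) + 1 = lenW Rpos v := by
  have hαpos := h.simple_subset hα
  have hα_mem : α ∈ Rpos.filter fun β => v β ∉ Rpos := mem_filter.2 ⟨hαpos, hvα⟩
  have hvsα := h.mul_sref_apply_self_mem_pos hv (h.pos_subset hαpos) hvα
  have hcard : lenW Rpos (v * sref α) = #((Rpos.filter fun β => v β ∉ Rpos).erase α) := by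
    refine card_nbij' (sref α) (sref α) ?_ ?_ (fun β _ => sref_sref α β)
      (fun β _ => sref_sref α β)
    · intro β hβ
      rw [mem_coe, mem_filter, LinearIsometryEquiv.coe_mul, Function.comp_apply] at hβ
      have hβα : β ≠ α := by rintro rfl; exact hβ.2 hvsα
      have := mem_erase.1 (h.sref_mem_erase hα (mem_erase.2 ⟨hβα, hβ.1⟩))
      rw [mem_coe, mem_erase, mem_filter]
      exact ⟨this.1, this.2, hβ.2⟩
    · intro β hβ
      rw [mem_coe, mem_erase, mem_filter] at hβ
      have := mem_erase.1 (h.sref_mem_erase hα (mem_erase.2 ⟨hβ.1, hβ.2.1⟩))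
      rw [mem_coe, mem_filter, LinearIsometryEquiv.coe_mul, Function.comp_apply, sref_sref]
      exact ⟨this.2, hβ.2.2⟩
  rw [hcard, card_erase_of_mem hα_mem, lenW]
  have := card_pos.2 ⟨α, hα_mem⟩
  omega

theorem sub_apply_mem_corootCone (h : IsRootSystem R Rpos Δ) {x : E}
    (hx : isDominant Rpos x) (hxq : ∀ α ∈ Δ, ∃ q : ℚ, ⟪x, α⟫ = q) {v : E ≃ₗᵢ[ℝ] E}
    (hv : v ∈ weylGroup R) : x - v x ∈ corootCone Rpos := by
  induction hn : lenW Rpos v using Nat.strong_induction_on generalizing v with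
  | _ n ih =>
  by_cases hvΔ : ∀ α ∈ Δ, v α ∈ Rpos
  · rw [h.eq_one_of_mapsTo_pos hv fun β => h.mapsTo_pos_of_mapsTo_simple hv hvΔ]
    simp [zero_mem]
  push Not at hvΔ
  obtain ⟨α, hα, hvα⟩ := hvΔ
  have hαR := h.pos_subset (h.simple_subset hα)
  obtain ⟨q, hq⟩ := hxq α hα
  have hq0 : 0 ≤ q := by exact_mod_cast hq ▸ hx α (h.simple_subset hα)
  have hdecomp : x - v x = (x - (v * sref α) x) + (q : ℝ) • coroot ((v * sref α) α) := by
    have hv : v x = (v * sref α) (sref α x) := by simp [sref_sref]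
    rw [hv, coroot_map, coroot, sref_apply, map_sub, map_smul, map_smul, hq]
    module
  rw [hdecomp]
  refine add_mem (ih _ ?_ (mul_mem hv (sref_mem_weylGroup hαR)) rfl)
    (ratCast_smul_mem_corootCone hq0 (coroot_mem_corootCone
      (h.mul_sref_apply_self_mem_pos hv hαR hvα)))
  have := h.lenW_mul_sref_add_one hv hα hvα
  omega

theorem inner_apply_ne_zero (h : IsRootSystem R Rpos Δ) {g : E ≃ₗᵢ[ℝ] E}
    (hg : g ∈ weylGroup R) {x : E} (hx : ∀ α ∈ R, ⟪x, α⟫ ≠ 0) {α : E} (hα : α ∈ R) :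
    ⟪g x, α⟫ ≠ 0 := by
  rw [LinearIsometryEquiv.inner_map_eq_flip]
  exact hx _ (h.weylGroup_apply_mem (inv_mem hg) hα)

theorem apply_mem_corootLattice (h : IsRootSystem R Rpos Δ) {g : E ≃ₗᵢ[ℝ] E}
    (hg : g ∈ weylGroup R) {x : E} (hx : x ∈ corootLattice R) : g x ∈ corootLattice R := by
  induction hx using Submodule.span_induction with
  | mem y hy =>
    obtain ⟨β, hβ, rfl⟩ := hy
    rw [← coroot_map]
    exact Submodule.subset_span ⟨g β, h.weylGroup_apply_mem hg hβ, rfl⟩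
  | zero => simp
  | add y z _ _ hy hz => simpa using add_mem hy hz
  | smul n y _ hy => simpa using Submodule.smul_mem _ n hy

theorem domLE_smul_sum_apply (h : IsRootSystem R Rpos Δ) {x : E} (hx : isDominant Rpos x)
    (hxq : ∀ α ∈ Δ, ∃ q : ℚ, ⟪x, α⟫ = q) {ι : Type*} {s : Finset ι} (hs : s.Nonempty)
    {g : ι → E ≃ₗᵢ[ℝ] E} (hg : ∀ i ∈ s, g i ∈ weylGroup R) :
    domLE Rpos ((#s : ℝ)⁻¹ • ∑ i ∈ s, g i x) x := by
  have hs : (#s : ℝ) ≠ 0 := Nat.cast_ne_zero.2 hs.card_pos.ne'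
  have hsub : x - (#s : ℝ)⁻¹ • ∑ i ∈ s, g i x = (((#s : ℚ)⁻¹ : ℚ) : ℝ) • ∑ i ∈ s, (x - g i x) := by
    rw [sum_sub_distrib, sum_const, ← Nat.cast_smul_eq_nsmul ℝ, smul_sub, smul_smul]
    push_cast
    rw [inv_mul_cancel₀ hs, one_smul]
  rw [domLE_iff_sub_mem_corootCone, hsub]
  exact ratCast_smul_mem_corootCone (by positivity)
    (sum_mem fun i hi => h.sub_apply_mem_corootCone hx hxq (hg i hi))

theorem smul_sum_apply_ne_self (h : IsRootSystem R Rpos Δ) {x : E}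
    (hx : isStrictlyDominant Rpos x) {ι : Type*} {s : Finset ι} {g : ι → E ≃ₗᵢ[ℝ] E}
    (hg : ∀ i ∈ s, g i ∈ weylGroup R) (hne : ∃ i ∈ s, g i ≠ 1) :
    (#s : ℝ)⁻¹ • ∑ i ∈ s, g i x ≠ x := by
  obtain ⟨i, hi, hgi⟩ := hne
  intro hmean
  have hs : (#s : ℝ) ≠ 0 := Nat.cast_ne_zero.2 (card_ne_zero_of_mem hi)
  have hsum : ∑ i ∈ s, g i x = (#s : ℝ) • x := by
    conv_rhs => rw [← hmean]
    rw [smul_smul, mul_inv_cancel₀ hs, one_smul]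
  have hfix := eq_of_sum_eq_card_smul_of_norm_le (f := fun i => g i x) (by simp) hsum
  exact hgi (h.eq_one_of_apply_eq_self (hg i hi) hx (hfix i hi))

end IsRootSystem

end InnerProductSpace

theorem stmt_5_general (R Rpos Δ : Finset V) (h : IsRootSystem R Rpos Δ)
    (lam : V) (hlat : lam ∈ corootLattice R) (hreg : ∀ α ∈ R, ⟪lam, α⟫ ≠ 0)
    (w : V ≃ₗᵢ[ℝ] V) (hw : w ∈ weylGroup R) (hw1 : w ≠ 1)
    (m : ℕ) (hm : orderOf w = m)
    (ν : V)
    (u : V ≃ₗᵢ[ℝ] V) (hu : u ∈ weylGroup R)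
    (hν : ν = u ((m : ℝ)⁻¹ • ∑ i ∈ Finset.range m, (w ^ (i + 1)) lam))
    (lamp : V) (hpd : isDominant Rpos lamp)
    (u' : V ≃ₗᵢ[ℝ] V) (hu' : u' ∈ weylGroup R) (hp : lamp = u' lam) :
    domLE Rpos ν lamp ∧ ν ≠ lamp := by
  have hm1 : 1 < m := lt_of_le_of_ne (hm ▸ h.orderOf_pos hw)
    fun h1 => hw1 (orderOf_eq_one_iff.1 (hm.trans h1.symm))
  have hlamp : isStrictlyDominant Rpos lamp := fun α hα =>
    (hpd α hα).lt_of_ne' (hp ▸ h.inner_apply_ne_zero hu' hreg (h.pos_subset hα))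
  have hlampq : ∀ α ∈ Δ, ∃ q : ℚ, ⟪lamp, α⟫ = q := fun α hα => by
    obtain ⟨n, hn⟩ := h.exists_int_inner_of_mem_corootLattice
      (hp ▸ h.apply_mem_corootLattice hu' hlat) (h.pos_subset (h.simple_subset hα))
    exact ⟨n, by rw [hn]; norm_cast⟩
  set g : ℕ → (V ≃ₗᵢ[ℝ] V) := fun i => u * w ^ (i + 1) * u'⁻¹
  have hg : ∀ i ∈ range m, g i ∈ weylGroup R := fun i _ =>
    mul_mem (mul_mem hu (pow_mem hw _)) (inv_mem hu')
  have hνg : ν = (#(range m) : ℝ)⁻¹ • ∑ i ∈ range m, g i lamp := by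
    simp [hν, hp, g, map_sum]
  have hg1 : ∃ i ∈ range m, g i ≠ 1 := by
    by_contra! hg1
    have h01 := (hg1 0 (by simp; omega)).trans (hg1 1 (by simp; omega)).symm
    exact hw1 (by simpa [g, pow_two] using mul_left_cancel (mul_right_cancel h01))
  rw [hνg]
  exact ⟨h.domLE_smul_sum_apply hpd hlampq ⟨0, by simp; omega⟩ hg,
    h.smul_sum_apply_ne_self hlamp hg hg1⟩

theorem stmt_5 (R Rpos Δ : Finset V) (h : IsRootSystem R Rpos Δ)
    (lam : V) (hlat : lam ∈ corootLattice R) (hreg : ∀ α ∈ R, ⟪lam, α⟫ ≠ 0)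
    (w : V ≃ₗᵢ[ℝ] V) (hw : w ∈ weylGroup R) (hw1 : w ≠ 1)
    (m : ℕ) (hm : orderOf w = m)
    (ν : V) (hνdom : isDominant Rpos ν)
    (u : V ≃ₗᵢ[ℝ] V) (hu : u ∈ weylGroup R)
    (hν : ν = u ((m : ℝ)⁻¹ • ∑ i ∈ Finset.range m, (w ^ (i + 1)) lam))
    (lamp : V) (hpd : isDominant Rpos lamp)
    (u' : V ≃ₗᵢ[ℝ] V) (hu' : u' ∈ weylGroup R) (hp : lamp = u' lam) :
    domLE Rpos ν lamp ∧ ν ≠ lamp :=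
  stmt_5_general R Rpos Δ h lam hlat hreg w hw hw1 m hm ν u hu hν lamp hpd u' hu' hp
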